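/- arXiv:1611.09762 — 5 statements merged into one kernel-verified Lean document; each statement's English description precedes it below -/
import Mathlib

section
/- Let 0 < s < 1 and let ε > 0 be small enough depending only on s. There exist constants c > 0 and C ≥ 1 (depending only on s) such that for all dyadic 0 < δ < 1/2 the following holds. Assume that P ⊂ B(0,1) ⊂ ℝ² is a (δ,1,δ^{−ε})-set with |P| ≥ δ^{−1+ε}, and 𝓣 is a family of dyadic δ-tubes such that for every point p ∈ P there exists a sub-family 𝓣_p ⊂ {T ∈ 𝓣 : p ∈ T} with |𝓣_p| ≥ δ^{−s+ε}. Then |𝓣| ≥ c (log(1/δ))^{−C} δ^{−2s+6ε}. -/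
open Metric MeasureTheory Filter Set
open scoped ENNReal NNReal Pointwise

noncomputable section

abbrev Plane : Type := EuclideanSpace ℝ (Fin 2)

def pt (a b : ℝ) : Plane := (EuclideanSpace.equiv (Fin 2) ℝ).symm ![a, b]

def proj (e x : Plane) : ℝ := inner ℝ x e

def lineThrough (a e : Plane) : Set Plane := {x | ∃ t : ℝ, x = a + t • e}

def dualLine (p : Plane) : Set Plane := {q | q 1 = p 0 * q 0 + p 1}

def hContent {X : Type*} [PseudoEMetricSpace X] (s : ℝ) (B : Set X) : ℝ≥0∞ :=
  ⨅ (U : ℕ → Set X) (_ : B ⊆ ⋃ i, U i), ∑' i, EMetric.diam (U i) ^ s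

def covN {X : Type*} [PseudoMetricSpace X] (F : Set X) (δ : ℝ) : ℕ∞ :=
  ⨅ (G : Finset X) (_ : F ⊆ ⋃ x ∈ G, Metric.closedBall x δ), (G.card : ℕ∞)

def upperMinkDim {X : Type*} [PseudoMetricSpace X] (F : Set X) : EReal :=
  Filter.limsup (fun δ : ℝ => ((Real.log ((covN F δ).toNat : ℝ) / Real.log (1 / δ) : ℝ) : EReal))
    (nhdsWithin 0 (Set.Ioi 0))

def packDim {X : Type*} [PseudoMetricSpace X] (K : Set X) : EReal :=
  ⨅ (F : ℕ → Set X) (_ : K ⊆ ⋃ i, F i) (_ : ∀ i, Bornology.IsBounded (F i)),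
    ⨆ i, upperMinkDim (F i)

def IsDeltaSet {X : Type*} [PseudoMetricSpace X] (δ s C : ℝ) (P : Set X) : Prop :=
  P.Finite ∧ (∀ p ∈ P, ∀ q ∈ P, p ≠ q → δ ≤ dist p q) ∧
    ∀ (x : X) (r : ℝ), δ ≤ r → r ≤ 1 →
      ((P ∩ Metric.closedBall x r).ncard : ℝ) ≤ C * (r / δ) ^ s

def CoverableBy {X : Type*} [PseudoMetricSpace X] (F : Set X) (δ m : ℝ) : Prop :=
  ∃ G : Finset X, (F ⊆ ⋃ x ∈ G, Metric.closedBall x δ) ∧ (G.card : ℝ) ≤ m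

def DyadicCorner (δ : ℝ) (c : ℝ × ℝ) : Prop := ∃ m n : ℤ, c.1 = m * δ ∧ c.2 = n * δ

def DyadicCornerIn01 (δ : ℝ) (c : ℝ × ℝ) : Prop :=
  DyadicCorner δ c ∧ c.1 ∈ Set.Ico (0:ℝ) 1 ∧ c.2 ∈ Set.Ico (0:ℝ) 1

def tube (δ : ℝ) (c : ℝ × ℝ) : Set Plane :=
  {x | ∃ u ∈ Set.Ico c.1 (c.1 + δ), ∃ v ∈ Set.Ico c.2 (c.2 + δ), x 1 = u * x 0 + v}

def parent (ρ : ℝ) (c : ℝ × ℝ) : ℝ × ℝ := (ρ * ⌊c.1 / ρ⌋, ρ * ⌊c.2 / ρ⌋)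


def ordTube (δ : ℝ) (a v : Plane) : Set Plane := Metric.cthickening (δ / 2) (lineThrough a v)

def IsOrdTube (δ : ℝ) (T : Set Plane) : Prop := ∃ a v : Plane, ‖v‖ = 1 ∧ T = ordTube δ a v

def Separated (δ : ℝ) (A : Set ℝ) : Prop := ∀ a ∈ A, ∀ b ∈ A, a ≠ b → δ ≤ |a - b|

def CoverableByIntervals (F : Set ℝ) (δ m : ℝ) : Prop :=
  ∃ G : Finset ℝ, (F ⊆ ⋃ x ∈ G, Set.Icc x (x + δ)) ∧ (G.card : ℝ) ≤ m

/-! Cauchy–Schwarz on the incidences between `P` and the chosen tubes `𝓣_p` gives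
`(∑_p |𝓣_p|)² ≤ |𝓣| · ∑_{p,q} |𝓣_p ∩ 𝓣_q|`. The diagonal contributes `∑_p |𝓣_p|`. Two points at
distance `ρ ≥ δ` lie in at most `O(1/ρ)` common dyadic `δ`-tubes, and summing `1/ρ` over a
`(δ,1,C)`-set shell by dyadic shell costs `O(log(1/δ) · C/δ)` per point. Since `|P| ≲ δ^{-1-ε}` and
`|𝓣_p| ≥ δ^{-s+ε}`, this forces `|𝓣| ≳ δ^{-2s+6ε} / log(1/δ)`. -/

open Finset

lemma card_le_div_add_one_of_abs_sub_le {δ R : ℝ} (hδ : 0 < δ) (hR : 0 ≤ R) {A : Finset ℝ}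
    (hAδ : ∀ a ∈ A, ∃ m : ℤ, a = m * δ) (hAR : ∀ a ∈ A, ∀ b ∈ A, |a - b| ≤ R) :
    (#A : ℝ) ≤ R / δ + 1 := by
  obtain rfl | hA := A.eq_empty_or_nonempty
  · simp only [Finset.card_empty, CharP.cast_eq_zero]; positivity
  have floor_mul : ∀ a ∈ A, (⌊a / δ⌋ : ℝ) * δ = a := by
    intro a ha
    obtain ⟨m, rfl⟩ := hAδ a ha
    rw [mul_div_cancel_right₀ _ hδ.ne', Int.floor_intCast]
  set a₀ := A.min' hA
  set n := ⌊R / δ⌋₊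
  have hmaps : ∀ a ∈ A, ⌊a / δ⌋ ∈ Finset.Icc ⌊a₀ / δ⌋ (⌊a₀ / δ⌋ + n) := by
    intro a ha
    refine Finset.mem_Icc.2 ⟨Int.floor_mono (div_le_div_of_nonneg_right (A.min'_le a ha) hδ.le), ?_⟩
    have : ((⌊a / δ⌋ - ⌊a₀ / δ⌋ : ℤ) : ℝ) ≤ R / δ := by
      rw [le_div_iff₀ hδ]; push_cast
      rw [sub_mul, floor_mul a ha, floor_mul a₀ (A.min'_mem hA)]
      exact (le_abs_self _).trans (hAR a ha a₀ (A.min'_mem hA))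
    have := Int.le_floor.2 this
    rw [← Int.natCast_floor_eq_floor (div_nonneg hR hδ.le)] at this
    omega
  have hinj : Set.InjOn (fun a => ⌊a / δ⌋) A := fun a ha b hb hab => by
    rw [← floor_mul a ha, ← floor_mul b hb, show ⌊a / δ⌋ = ⌊b / δ⌋ from hab]
  have hcard := card_le_card_of_injOn _ hmaps hinj
  rw [Int.card_Icc, show ⌊a₀ / δ⌋ + n + 1 - ⌊a₀ / δ⌋ = ((n + 1 : ℕ) : ℤ) by push_cast; ring,
    Int.toNat_natCast] at hcard
  calc (#A : ℝ) ≤ n + 1 := by exact_mod_cast hcard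
    _ ≤ R / δ + 1 := by gcongr; exact Nat.floor_le (by positivity)

lemma min_inv_le_one_add_sum_two_pow {d : ℝ} (hd : 0 < d) (k : ℕ) :
    min d⁻¹ (2 ^ k) ≤ 1 + ∑ i ∈ range k, if d ≤ (2 ^ i)⁻¹ then (2 : ℝ) ^ (i + 1) else 0 := by
  induction k with
  | zero => simp
  | succ k ih =>
    rw [sum_range_succ]
    split_ifs with h
    · rw [min_eq_right ((le_inv_comm₀ hd (by positivity)).1 h)] at ih
      calc min d⁻¹ (2 ^ (k + 1)) ≤ 2 ^ (k + 1) := min_le_right _ _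
        _ ≤ _ := by rw [pow_succ]; linarith [pow_pos (two_pos : (0 : ℝ) < 2) k]
    · have h' : d⁻¹ < 2 ^ k := (inv_lt_comm₀ hd (by positivity)).2 (not_le.1 h)
      rw [min_eq_left h'.le] at ih
      rw [min_eq_left (h'.le.trans (pow_le_pow_right₀ one_le_two k.le_succ))]
      linarith

lemma sum_inv_dist_le_of_card_closedBall_le {X : Type*} [PseudoMetricSpace X] {p : X}
    {E : Finset X} {k : ℕ} {K : ℝ} (hE : #E ≤ K)
    (hball : ∀ i < k, #{q ∈ E | dist p q ≤ (2 ^ i)⁻¹} ≤ K * (2 ^ i)⁻¹)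
    (hsep : ∀ q ∈ E, (2 ^ k)⁻¹ ≤ dist p q) :
    ∑ q ∈ E, (dist p q)⁻¹ ≤ (2 * k + 1) * K := by
  calc ∑ q ∈ E, (dist p q)⁻¹
      ≤ ∑ q ∈ E, (1 + ∑ i ∈ range k, if dist p q ≤ (2 ^ i)⁻¹ then (2 : ℝ) ^ (i + 1) else 0) := by
        refine sum_le_sum fun q hq => ?_
        have hq₀ : 0 < dist p q := (by positivity : (0 : ℝ) < (2 ^ k)⁻¹).trans_le (hsep q hq)
        have := min_inv_le_one_add_sum_two_pow hq₀ k
        rwa [min_eq_left (inv_le_of_inv_le₀ (by positivity) (hsep q hq))] at this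
    _ = #E + ∑ i ∈ range k, (2 : ℝ) ^ (i + 1) * #{q ∈ E | dist p q ≤ (2 ^ i)⁻¹} := by
        rw [sum_add_distrib, sum_comm]
        simp [sum_ite, mul_comm]
    _ ≤ K + ∑ i ∈ range k, (2 : ℝ) ^ (i + 1) * (K * (2 ^ i)⁻¹) := by
        gcongr with i hi
        exact hball i (mem_range.1 hi)
    _ = (2 * k + 1) * K := by
        rw [sum_congr rfl fun i _ => show (2 : ℝ) ^ (i + 1) * (K * (2 ^ i)⁻¹) = 2 * K by
          field_simp; ring]
        simp only [sum_const, card_range, nsmul_eq_mul]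
        ring

lemma Finset.sq_sum_card_le_card_mul_sum_card_inter {α β : Type*} [DecidableEq β]
    {S : Finset α} {T : Finset β} {A : α → Finset β} (hA : ∀ p ∈ S, A p ⊆ T) :
    (∑ p ∈ S, #(A p)) ^ 2 ≤ #T * ∑ p ∈ S, ∑ q ∈ S, #(A p ∩ A q) := by
  have hdeg : ∑ p ∈ S, #(A p) = ∑ t ∈ T, #{p ∈ S | t ∈ A p} := by
    refine (sum_congr rfl fun p hp => ?_).trans
      (sum_card_bipartiteAbove_eq_sum_card_bipartiteBelow (fun p t => t ∈ A p))
    rw [bipartiteAbove, filter_mem_eq_inter, inter_eq_right.2 (hA p hp)]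
  have hcodeg : ∑ t ∈ T, #{p ∈ S | t ∈ A p} ^ 2 = ∑ p ∈ S, ∑ q ∈ S, #(A p ∩ A q) := by
    rw [← sum_product' (f := fun p q => #(A p ∩ A q))]
    refine (sum_congr rfl fun t _ => ?_).trans
      ((sum_card_bipartiteAbove_eq_sum_card_bipartiteBelow
        (fun pq t => t ∈ A pq.1 ∩ A pq.2)).symm.trans (sum_congr rfl fun pq hpq => ?_))
    · rw [bipartiteBelow, sq, ← card_product, ← filter_product]
      simp only [mem_inter]
    · rw [bipartiteAbove, filter_mem_eq_inter,
        inter_eq_right.2 (inter_subset_left.trans (hA pq.1 (mem_product.1 hpq).1))]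
  rw [hdeg, ← hcodeg]
  exact sq_sum_le_card_mul_sum_sq

lemma sq_le_mul_add_of_sq_le_mul_add {N x y a b : ℝ} (ha : 0 < a) (hax : a ≤ x) (hy : 0 ≤ y)
    (hyb : y ≤ b) (h : x ^ 2 ≤ N * (x + y)) : a ^ 2 ≤ N * (a + b) := by
  have hx : 0 < x := ha.trans_le hax
  have hN : 0 ≤ N := by
    by_contra! hN
    nlinarith
  have hmono : a ^ 2 * (x + y) ≤ x ^ 2 * (a + b) := by
    nlinarith [mul_le_mul_of_nonneg_left hax (mul_nonneg ha.le hx.le), pow_le_pow_left₀ ha.le hax 2,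
      mul_le_mul_of_nonneg_left hyb (sq_nonneg x)]
  refine le_of_mul_le_mul_right ?_ (by linarith : 0 < x + y)
  nlinarith

lemma Finset.sq_le_card_mul_of_sum_card_inter_le {α β : Type*} [DecidableEq α] [DecidableEq β]
    {S : Finset α} {T : Finset β} {A : α → Finset β} (hA : ∀ p ∈ S, A p ⊆ T) {a b : ℝ}
    (ha : 0 < a) (hI : a ≤ ∑ p ∈ S, (#(A p) : ℝ))
    (hW : ∑ p ∈ S, ∑ q ∈ S.erase p, (#(A p ∩ A q) : ℝ) ≤ b) : a ^ 2 ≤ #T * (a + b) := by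
  have hCS : (∑ p ∈ S, (#(A p) : ℝ)) ^ 2 ≤ #T * ∑ p ∈ S, ∑ q ∈ S, (#(A p ∩ A q) : ℝ) := by
    exact_mod_cast sq_sum_card_le_card_mul_sum_card_inter hA
  have hdiag : ∑ p ∈ S, ∑ q ∈ S, (#(A p ∩ A q) : ℝ)
      = ∑ p ∈ S, (#(A p) : ℝ) + ∑ p ∈ S, ∑ q ∈ S.erase p, (#(A p ∩ A q) : ℝ) := by
    rw [← sum_add_distrib]
    exact sum_congr rfl fun p hp => by rw [← add_sum_erase S _ hp, inter_self]
  rw [hdiag] at hCS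
  exact sq_le_mul_add_of_sq_le_mul_add ha hI (by positivity) hW hCS

lemma IsDeltaSet.card_le {X : Type*} [PseudoMetricSpace X] {δ s C : ℝ} {P : Set X}
    (hP : IsDeltaSet δ s C P) {F : Finset X} {x : X} {r : ℝ} (hr : δ ≤ r) (hr₁ : r ≤ 1)
    (hF : ↑F ⊆ P ∩ closedBall x r) : (#F : ℝ) ≤ C * (r / δ) ^ s := by
  calc (#F : ℝ) = (↑F : Set X).ncard := by rw [Set.ncard_coe_finset]
    _ ≤ (P ∩ closedBall x r).ncard := by
        exact_mod_cast Set.ncard_le_ncard hF (hP.1.subset inter_subset_left)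
    _ ≤ C * (r / δ) ^ s := hP.2.2 x r hr hr₁

lemma IsDeltaSet.sum_inv_dist_le {X : Type*} [PseudoMetricSpace X] [DecidableEq X] {δ C : ℝ} {k : ℕ}
    (hδ : δ = (2 ^ k)⁻¹) {P : Set X} (hP : IsDeltaSet δ 1 C P) {x₀ : X}
    (hPb : P ⊆ closedBall x₀ 1) {p : X} (hp : p ∈ P) :
    ∑ q ∈ hP.1.toFinset.erase p, (dist p q)⁻¹ ≤ (2 * k + 1) * (C / δ) := by
  have hmem : ∀ q ∈ hP.1.toFinset.erase p, q ≠ p ∧ q ∈ P := by simp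
  refine sum_inv_dist_le_of_card_closedBall_le ?_ (fun i hi => ?_) fun q hq => ?_
  · have := hP.card_le (F := hP.1.toFinset.erase p)
      (hδ ▸ inv_le_one_of_one_le₀ (one_le_pow₀ one_le_two)) le_rfl
      fun q hq => ⟨(hmem q hq).2, hPb (hmem q hq).2⟩
    rwa [Real.rpow_one, mul_one_div] at this
  · have hr : δ ≤ (2 ^ i)⁻¹ := hδ ▸ inv_anti₀ (by positivity) (pow_le_pow_right₀ one_le_two hi.le)
    have hr₁ : ((2 : ℝ) ^ i)⁻¹ ≤ 1 := inv_le_one_of_one_le₀ (one_le_pow₀ one_le_two)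
    calc _ ≤ C * ((2 ^ i)⁻¹ / δ) ^ (1 : ℝ) := hP.card_le hr hr₁ fun q hq => by
          simp only [coe_filter, Set.mem_ofPred_eq] at hq
          exact ⟨(hmem q hq.1).2, by rw [mem_closedBall, dist_comm]; exact hq.2⟩
      _ = C / δ * (2 ^ i)⁻¹ := by rw [Real.rpow_one]; ring
  · rw [← hδ]
    exact hP.2.1 p hp q (hmem q hq).2 (hmem q hq).1.symm

lemma abs_sub_le_of_mem_tube {δ : ℝ} {c : ℝ × ℝ} {p : Plane} (hp : |p 0| ≤ 1)
    (h : p ∈ tube δ c) : |p 1 - c.1 * p 0 - c.2| ≤ 2 * δ := by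
  obtain ⟨u, ⟨hu₀, hu₁⟩, v, ⟨hv₀, hv₁⟩, hpuv⟩ := h
  have hslope : |(u - c.1) * p 0| ≤ δ := by
    rw [abs_mul, abs_of_nonneg (sub_nonneg.2 hu₀)]
    nlinarith [abs_nonneg (p 0)]
  rw [hpuv, abs_le] at *
  constructor <;> nlinarith [hslope.1, hslope.2]

lemma abs_slope_sub_mul_le_of_mem_tubes {δ : ℝ} {c c' : ℝ × ℝ} {p q : Plane} (hp : |p 0| ≤ 1)
    (hq : |q 0| ≤ 1) (hpc : p ∈ tube δ c) (hqc : q ∈ tube δ c) (hpc' : p ∈ tube δ c')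
    (hqc' : q ∈ tube δ c') :
    |c.1 - c'.1| * |p 0 - q 0| ≤ 8 * δ := by
  have h₁ := abs_le.1 (abs_sub_le_of_mem_tube hp hpc)
  have h₂ := abs_le.1 (abs_sub_le_of_mem_tube hq hqc)
  have h₃ := abs_le.1 (abs_sub_le_of_mem_tube hp hpc')
  have h₄ := abs_le.1 (abs_sub_le_of_mem_tube hq hqc')
  rw [← abs_mul, abs_le]
  constructor <;> linarith

lemma dist_le_of_mem_tube {δ : ℝ} {c : ℝ × ℝ} (hc : c.1 ∈ Ico (0 : ℝ) 1) {p q : Plane}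
    (hp : |p 0| ≤ 1) (hq : |q 0| ≤ 1) (hpc : p ∈ tube δ c) (hqc : q ∈ tube δ c) :
    dist p q ≤ 2 * |p 0 - q 0| + 4 * δ := by
  have h₁ := abs_le.1 (abs_sub_le_of_mem_tube hp hpc)
  have h₂ := abs_le.1 (abs_sub_le_of_mem_tube hq hqc)
  have hvert : |p 1 - q 1| ≤ |p 0 - q 0| + 4 * δ := by
    have : |c.1 * (p 0 - q 0)| ≤ |p 0 - q 0| := by
      rw [abs_mul, abs_of_nonneg hc.1]
      exact mul_le_of_le_one_left (abs_nonneg _) hc.2.le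
    rw [abs_le] at this ⊢
    constructor <;> nlinarith
  have hdist : dist p q ≤ |p 0 - q 0| + |p 1 - q 1| := by
    rw [EuclideanSpace.dist_eq, Fin.sum_univ_two, Real.dist_eq, Real.dist_eq]
    refine Real.sqrt_le_iff.2 ⟨by positivity, ?_⟩
    nlinarith [sq_abs (p 0 - q 0), sq_abs (p 1 - q 1), abs_nonneg (p 0 - q 0),
      abs_nonneg (p 1 - q 1)]
  linarith

lemma abs_slope_sub_le_of_mem_tubes {δ : ℝ} (hδ : 0 < δ) {c c' : ℝ × ℝ}
    (hc : c.1 ∈ Ico (0 : ℝ) 1) (hc' : c'.1 ∈ Ico (0 : ℝ) 1) {p q : Plane} (hp : |p 0| ≤ 1)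
    (hq : |q 0| ≤ 1) (hpq : 0 < dist p q) (hpc : p ∈ tube δ c) (hqc : q ∈ tube δ c)
    (hpc' : p ∈ tube δ c') (hqc' : q ∈ tube δ c') :
    |c.1 - c'.1| ≤ 32 * δ / dist p q := by
  have hcross := abs_slope_sub_mul_le_of_mem_tubes hp hq hpc hqc hpc' hqc'
  have hdist := dist_le_of_mem_tube hc hp hq hpc hqc
  have hslope : |c.1 - c'.1| ≤ 1 :=
    abs_sub_le_iff.2 ⟨by linarith [hc.2, hc'.1], by linarith [hc.1, hc'.2]⟩
  rw [le_div_iff₀ hpq]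
  -- Either `|p 0 - q 0| ≥ 2δ`, so that `dist p q ≤ 4 |p 0 - q 0|`, or the points are within `8δ`
  -- and the trivial bound `|c.1 - c'.1| ≤ 1` suffices.
  rcases le_or_gt (2 * δ) |p 0 - q 0| with hx | hx
  · nlinarith [abs_nonneg (c.1 - c'.1)]
  · nlinarith [abs_nonneg (c.1 - c'.1)]

lemma card_tubes_through_point_with_slope_le {δ : ℝ} (hδ : 0 < δ) {p : Plane} (hp : |p 0| ≤ 1)
    {S : Finset (ℝ × ℝ)} (hS : ∀ c ∈ S, DyadicCorner δ c ∧ p ∈ tube δ c) (u : ℝ) :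
    #{c ∈ S | c.1 = u} ≤ 5 := by
  have hinj : Set.InjOn Prod.snd (↑{c ∈ S | c.1 = u} : Set (ℝ × ℝ)) := by
    intro c hc c' hc' h
    simp only [coe_filter, Set.mem_ofPred_eq] at hc hc'
    exact Prod.ext (hc.2.trans hc'.2.symm) h
  have := card_le_div_add_one_of_abs_sub_le hδ (by positivity) (R := 4 * δ)
    (A := {c ∈ S | c.1 = u}.image Prod.snd)
    (by
      simp only [Finset.mem_image, mem_filter]
      rintro _ ⟨c, ⟨hc, -⟩, rfl⟩
      obtain ⟨-, n, -, hn⟩ := (hS c hc).1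
      exact ⟨n, hn⟩)
    (by
      simp only [Finset.mem_image, mem_filter]
      rintro _ ⟨c, ⟨hc, rfl⟩, rfl⟩ _ ⟨c', ⟨hc', hcc'⟩, rfl⟩
      have h₁ := abs_le.1 (abs_sub_le_of_mem_tube hp (hS c hc).2)
      have h₂ := abs_le.1 (abs_sub_le_of_mem_tube hp (hS c' hc').2)
      rw [hcc'] at h₂
      exact abs_le.2 ⟨by linarith, by linarith⟩)
  rw [card_image_of_injOn hinj, mul_div_cancel_right₀ _ hδ.ne'] at this
  exact_mod_cast (show (#{c ∈ S | c.1 = u} : ℝ) ≤ 5 by linarith)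

lemma card_tubes_through_pair_le {δ : ℝ} (hδ : 0 < δ) {p q : Plane} (hp : ‖p‖ ≤ 1)
    (hq : ‖q‖ ≤ 1) (hpq : δ ≤ dist p q) {S : Finset (ℝ × ℝ)}
    (hS : ∀ c ∈ S, DyadicCornerIn01 δ c ∧ p ∈ tube δ c ∧ q ∈ tube δ c) :
    (#S : ℝ) ≤ 170 / dist p q := by
  have hρ : 0 < dist p q := hδ.trans_le hpq
  have hρ₂ : dist p q ≤ 2 := (dist_le_norm_add_norm p q).trans (by linarith)
  have hp₀ : |p 0| ≤ 1 := (PiLp.norm_apply_le p 0).trans hp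
  have hq₀ : |q 0| ≤ 1 := (PiLp.norm_apply_le q 0).trans hq
  have hslopes := card_le_div_add_one_of_abs_sub_le hδ (by positivity) (A := S.image Prod.fst)
    (R := 32 * δ / dist p q)
    (by
      simp only [Finset.mem_image]
      rintro _ ⟨c, hc, rfl⟩
      obtain ⟨m, -, hm, -⟩ := (hS c hc).1.1
      exact ⟨m, hm⟩)
    (by
      simp only [Finset.mem_image]
      rintro _ ⟨c, hc, rfl⟩ _ ⟨c', hc', rfl⟩
      obtain ⟨⟨-, hc₁, -⟩, hpc, hqc⟩ := hS c hc
      obtain ⟨⟨-, hc₁', -⟩, hpc', hqc'⟩ := hS c' hc'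
      exact abs_slope_sub_le_of_mem_tubes hδ hc₁ hc₁' hp₀ hq₀ hρ hpc hqc hpc' hqc')
  have hfibre : ∀ u ∈ S.image Prod.fst, #{c ∈ S | c.1 = u} ≤ 5 := fun u _ =>
    card_tubes_through_point_with_slope_le hδ hp₀ (fun c hc => ⟨(hS c hc).1.1, (hS c hc).2.1⟩) u
  have hcard : (#S : ℝ) ≤ 5 * #(S.image Prod.fst) := by
    exact_mod_cast card_le_mul_card_image S 5 hfibre
  rw [show 32 * δ / dist p q / δ = 32 / dist p q by field_simp] at hslopes
  have : (1 : ℝ) ≤ 2 / dist p q := by rw [le_div_iff₀ hρ]; linarith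
  calc (#S : ℝ) ≤ 5 * (32 / dist p q + 1) := by linarith
    _ = 5 * (32 / dist p q) + 5 * 1 := by ring
    _ ≤ 5 * (32 / dist p q) + 5 * (2 / dist p q) := by gcongr
    _ = 170 / dist p q := by ring

lemma Set.Finite.exists_finset_subfamilies {α β : Type*} {𝓣 : Set β} (h𝓣 : 𝓣.Finite)
    {P : Set α} {R : α → β → Prop} {m : ℝ}
    (h : ∀ p ∈ P, ∃ 𝓣p ⊆ 𝓣, (∀ c ∈ 𝓣p, R p c) ∧ m ≤ (𝓣p.ncard : ℝ)) :
    ∃ A : α → Finset β, ∀ p ∈ P, A p ⊆ h𝓣.toFinset ∧ (∀ c ∈ A p, R p c) ∧ m ≤ #(A p) := by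
  classical
  choose! T hT𝓣 hTR hTm using h
  refine ⟨fun p => {c ∈ h𝓣.toFinset | c ∈ T p}, fun p hp =>
    ⟨filter_subset _ _, fun c hc => hTR p hp c (mem_filter.1 hc).2, ?_⟩⟩
  have hTp : (↑{c ∈ h𝓣.toFinset | c ∈ T p} : Set β) = T p := by
    ext c
    simpa using fun hc => hT𝓣 p hp hc
  rw [← Set.ncard_coe_finset, hTp]
  exact hTm p hp

lemma incidence_sq_le {δ C : ℝ} {k : ℕ} (hδ : δ = (2 ^ k)⁻¹) (hC : 0 ≤ C) {P : Set Plane}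
    (hP : IsDeltaSet δ 1 C P) (hPb : P ⊆ closedBall 0 1) {T : Finset (ℝ × ℝ)}
    {A : Plane → Finset (ℝ × ℝ)} (hAT : ∀ p ∈ P, A p ⊆ T)
    (hA : ∀ p ∈ P, ∀ c ∈ A p, DyadicCornerIn01 δ c ∧ p ∈ tube δ c) {a : ℝ} (ha : 0 < a)
    (hI : a ≤ ∑ p ∈ hP.1.toFinset, (#(A p) : ℝ)) :
    a ^ 2 ≤ #T * (a + 170 * (2 * k + 1) * (C / δ) ^ 2) := by
  classical
  have hδ₀ : 0 < δ := hδ ▸ by positivity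
  have hδ₁ : δ ≤ 1 := hδ ▸ inv_le_one_of_one_le₀ (one_le_pow₀ one_le_two)
  have hnorm : ∀ p ∈ P, ‖p‖ ≤ 1 := fun p hp => mem_closedBall_zero_iff.1 (hPb hp)
  have hpair : ∀ p ∈ P, ∑ q ∈ hP.1.toFinset.erase p, (#(A p ∩ A q) : ℝ)
      ≤ 170 * ((2 * k + 1) * (C / δ)) := by
    intro p hp
    calc _ ≤ ∑ q ∈ hP.1.toFinset.erase p, 170 * (dist p q)⁻¹ := sum_le_sum fun q hq => by
          obtain ⟨hqp, hq⟩ : q ≠ p ∧ q ∈ P := by simpa using hq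
          rw [← div_eq_mul_inv]
          refine card_tubes_through_pair_le hδ₀ (hnorm p hp) (hnorm q hq)
            (hP.2.1 p hp q hq hqp.symm) fun c hc => ?_
          obtain ⟨hcp, hcq⟩ := mem_inter.1 hc
          exact ⟨(hA p hp c hcp).1, (hA p hp c hcp).2, (hA q hq c hcq).2⟩
      _ = 170 * ∑ q ∈ hP.1.toFinset.erase p, (dist p q)⁻¹ := (mul_sum ..).symm
      _ ≤ 170 * ((2 * k + 1) * (C / δ)) := by gcongr; exact hP.sum_inv_dist_le hδ hPb hp
  have hcard : (#hP.1.toFinset : ℝ) ≤ C / δ := by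
    have := hP.card_le (F := hP.1.toFinset) hδ₁ le_rfl fun q hq => by
      rw [Set.Finite.coe_toFinset] at hq
      exact ⟨hq, hPb hq⟩
    rwa [Real.rpow_one, mul_one_div] at this
  refine sq_le_card_mul_of_sum_card_inter_le (fun p hp => hAT p (by simpa using hp)) ha hI ?_
  calc _ ≤ ∑ p ∈ hP.1.toFinset, 170 * ((2 * k + 1) * (C / δ)) :=
        sum_le_sum fun p hp => hpair p (by simpa using hp)
    _ ≤ C / δ * (170 * ((2 * k + 1) * (C / δ))) := by
        rw [sum_const, nsmul_eq_mul]
        gcongr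
    _ = 170 * (2 * k + 1) * (C / δ) ^ 2 := by ring

lemma incidence_bound_of_sq_le {δ s ε : ℝ} {k N : ℕ} (hδ : δ = (2 ^ k)⁻¹) (hk : 1 ≤ k) (hε : 0 ≤ ε)
    (hs : s ≤ 1)
    (h : (δ ^ (-1 + ε) * δ ^ (-s + ε)) ^ 2
      ≤ N * (δ ^ (-1 + ε) * δ ^ (-s + ε) + 170 * (2 * k + 1) * (δ ^ (-ε) / δ) ^ 2)) :
    1 / 1000 * Real.log (1 / δ) ^ (-1 : ℝ) * δ ^ (-2 * s + 6 * ε) ≤ N := by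
  have hδ₀ : 0 < δ := hδ ▸ by positivity
  have hδ₁ : δ ≤ 1 := hδ ▸ inv_le_one_of_one_le₀ (one_le_pow₀ one_le_two)
  have ha : δ ^ (-1 + ε) * δ ^ (-s + ε) = δ ^ (-1 - s + 2 * ε) := by
    rw [← Real.rpow_add hδ₀]; ring_nf
  have hD : (δ ^ (-ε) / δ) ^ 2 = δ ^ (-2 - 2 * ε) := by
    rw [← Real.rpow_sub_one hδ₀.ne', ← Real.rpow_natCast, ← Real.rpow_mul hδ₀.le]; ring_nf
  rw [ha, hD] at h
  have haD : δ ^ (-1 - s + 2 * ε) ≤ δ ^ (-2 - 2 * ε) :=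
    Real.rpow_le_rpow_of_exponent_ge hδ₀ hδ₁ (by linarith)
  have hsq : δ ^ (-2 * s + 6 * ε) * δ ^ (-2 - 2 * ε) = (δ ^ (-1 - s + 2 * ε)) ^ 2 := by
    rw [← Real.rpow_add hδ₀, ← Real.rpow_natCast, ← Real.rpow_mul hδ₀.le]; ring_nf
  have hmain : δ ^ (-2 * s + 6 * ε) ≤ (340 * k + 171) * N := by
    refine le_of_mul_le_mul_right ?_ (by positivity : 0 < δ ^ (-2 - 2 * ε))
    calc _ = (δ ^ (-1 - s + 2 * ε)) ^ 2 := hsq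
      _ ≤ _ := h
      _ ≤ N * ((340 * k + 171) * δ ^ (-2 - 2 * ε)) := by gcongr; linarith
      _ = _ := by ring
  have hlog : Real.log (1 / δ) = k * Real.log 2 := by
    rw [hδ, one_div, inv_inv, Real.log_pow]
  have hk' : (1 : ℝ) ≤ k := by exact_mod_cast hk
  have hL : (340 * k + 171 : ℝ) ≤ 1000 * Real.log (1 / δ) := by
    rw [hlog]; nlinarith [Real.log_two_gt_d9]
  have hL₀ : 0 < Real.log (1 / δ) := by linarith
  rw [Real.rpow_neg_one]
  calc 1 / 1000 * (Real.log (1 / δ))⁻¹ * δ ^ (-2 * s + 6 * ε)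
      ≤ 1 / 1000 * (Real.log (1 / δ))⁻¹ * ((340 * k + 171) * N) := by gcongr
    _ ≤ N := by
        rw [← div_eq_mul_inv, div_mul_eq_mul_div, div_le_iff₀ (by positivity)]
        nlinarith [Nat.cast_nonneg (α := ℝ) N]

/-- Lemma `2sBound` of the paper: the "trivial" incidence lower bound
`|𝓣| ≳ (log(1/δ))^{-C} δ^{-2s+6ε}`. Dyadic `δ`-tubes are encoded by the lower-left
corners `c ∈ (δℤ)² ∩ [0,1)²` of the dyadic squares defining them. -/
theorem incidence_trivial_bound :
    ∀ s : ℝ, 0 < s → s < 1 →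
      ∃ ε₀ : ℝ, 0 < ε₀ ∧
        ∃ c : ℝ, 0 < c ∧
          ∃ C : ℝ, 1 ≤ C ∧
            ∀ ε : ℝ, 0 < ε → ε ≤ ε₀ →
              ∀ (k : ℕ) (δ : ℝ), δ = (2 : ℝ) ^ (-(k : ℤ)) → δ < 1/2 →
                ∀ (P : Set Plane) (𝓣 : Set (ℝ × ℝ)),
                  P ⊆ Metric.ball (0 : Plane) 1 →
                  IsDeltaSet δ 1 (δ ^ (-ε)) P →
                  δ ^ (-(1 : ℝ) + ε) ≤ (P.ncard : ℝ) →
                  𝓣.Finite →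
                  (∀ cr ∈ 𝓣, DyadicCornerIn01 δ cr) →
                  (∀ p ∈ P, ∃ 𝓣p ⊆ 𝓣,
                    (∀ cr ∈ 𝓣p, p ∈ tube δ cr) ∧ δ ^ (-s + ε) ≤ (𝓣p.ncard : ℝ)) →
                  c * (Real.log (1/δ)) ^ (-C) * δ ^ (-2*s + 6*ε) ≤ (𝓣.ncard : ℝ) := by
  intro s _ hs
  refine ⟨1, one_pos, 1 / 1000, by norm_num, 1, le_rfl, ?_⟩
  intro ε hε _ k δ hδ hδ₂ P 𝓣 hPb hP hPcard h𝓣 h𝓣corner hcover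
  have hδ' : δ = (2 ^ k)⁻¹ := by rw [hδ, zpow_neg, zpow_natCast]
  have hδ₀ : 0 < δ := hδ' ▸ by positivity
  have hk : 1 ≤ k := Nat.one_le_iff_ne_zero.2 fun hk => by norm_num [hδ', hk] at hδ₂
  obtain ⟨A, hA⟩ := h𝓣.exists_finset_subfamilies hcover
  have hI : δ ^ (-1 + ε) * δ ^ (-s + ε) ≤ ∑ p ∈ hP.1.toFinset, (#(A p) : ℝ) := by
    rw [Set.ncard_eq_toFinset_card P hP.1] at hPcard
    calc _ ≤ #hP.1.toFinset * δ ^ (-s + ε) := by gcongr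
      _ ≤ _ := by
        rw [← nsmul_eq_mul]
        exact card_nsmul_le_sum _ _ _ fun p hp => (hA p (by simpa using hp)).2.2
  have key := incidence_sq_le hδ' (by positivity) hP (hPb.trans ball_subset_closedBall)
    (fun p hp => (hA p hp).1)
    (fun p hp c hc => ⟨h𝓣corner c (by simpa using (hA p hp).1 hc), (hA p hp).2.1 c hc⟩)
    (by positivity) hI
  rw [Set.ncard_eq_toFinset_card 𝓣 h𝓣]
  exact incidence_bound_of_sq_le hδ' hk hε.le hs.le key
end
end

section
/- There is an absolute constant C ≥ 1 with the following property. Let P ⊂ B(0,1) ⊂ ℝ² be a set and let 0 < δ₁ ≤ δ₂ be dyadic numbers. Let a₂ ∈ δ₂ℤ, and assume that P can be covered by M dyadic δ₂-tubes D([a₂, a₂+δ₂) × [b_j, b_j+δ₂)), 1 ≤ j ≤ M, all with slope a₂. Then there are at most C·M dyadic δ₂-tubes with slope a₂ whose union contains every dyadic δ₁-tube that intersects P and has slope belonging to [a₂, a₂+δ₂). -/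
open Metric MeasureTheory Filter Set
open scoped ENNReal NNReal Pointwise

noncomputable section

/-!
A dyadic `δ₁`-tube `T` of slope in `[a₂, a₂ + δ₂)` lies in its dyadic `δ₂`-parent, a tube of slope `a₂`.
If `T` meets `P` at a point `x`, then `x` also lies in one of the given tubes of slope `a₂`; two
`δ₂`-tubes of the same slope through a common point `x` with `|x₀| ≤ 1` have intercepts closer
than `2δ₂`. So the parent is one of the three tubes adjacent to a given one, and `3M` tubes suffice.
-/

lemma add_le_of_intCast_mul_lt {δ : ℝ} (hδ : 0 < δ) {m n : ℤ} (h : (m : ℝ) * δ < n * δ) :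
    (m : ℝ) * δ + δ ≤ n * δ := by
  have hmn : (m : ℝ) + 1 ≤ n := by exact_mod_cast (lt_of_mul_lt_mul_right h hδ.le : (m : ℝ) < n)
  nlinarith

lemma Ico_subset_Ico_mul_floor {δ ρ y : ℝ} (hδ : 0 < δ) (hρ : 0 < ρ)
    (hρδ : ∃ E : ℤ, ρ = E * δ) (hy : ∃ m : ℤ, y = m * δ) :
    Ico y (y + δ) ⊆ Ico (ρ * ⌊y / ρ⌋) (ρ * ⌊y / ρ⌋ + ρ) := by
  obtain ⟨E, rfl⟩ := hρδ
  obtain ⟨m, rfl⟩ := hy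
  have h_floor_le : (E * δ) * ⌊(m * δ) / (E * δ)⌋ ≤ m * δ := by
    have := Int.floor_le ((m * δ) / (E * δ))
    rw [le_div_iff₀ hρ] at this
    linarith
  have h_lt : (m : ℝ) * δ < (E * ⌊(m * δ) / (E * δ)⌋ + E : ℤ) * δ := by
    have := Int.lt_floor_add_one ((m * δ) / (E * δ))
    rw [div_lt_iff₀ hρ] at this
    push_cast
    linarith
  refine Ico_subset_Ico h_floor_le ?_
  have := add_le_of_intCast_mul_lt hδ h_lt
  push_cast at this
  linarith

lemma mul_floor_div_eq_of_mem_Ico {ρ y : ℝ} (hρ : 0 < ρ) {n : ℤ}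
    (hy : y ∈ Ico (n * ρ) (n * ρ + ρ)) : ρ * ⌊y / ρ⌋ = n * ρ := by
  have : ⌊y / ρ⌋ = n := by
    rw [Int.floor_eq_iff, le_div_iff₀ hρ, div_lt_iff₀ hρ]
    exact ⟨hy.1, by linarith [hy.2]⟩
  rw [this, mul_comm]

lemma tube_subset_tube {δ δ' : ℝ} {c c' : ℝ × ℝ}
    (h₁ : Ico c.1 (c.1 + δ) ⊆ Ico c'.1 (c'.1 + δ')) (h₂ : Ico c.2 (c.2 + δ) ⊆ Ico c'.2 (c'.2 + δ')) :
    tube δ c ⊆ tube δ' c' := by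
  rintro x ⟨u, hu, v, hv, hx⟩
  exact ⟨u, h₁ hu, v, h₂ hv, hx⟩

lemma tube_subset_tube_parent {δ ρ : ℝ} {c : ℝ × ℝ} (hδ : 0 < δ) (hρ : 0 < ρ)
    (hρδ : ∃ E : ℤ, ρ = E * δ) (hc : DyadicCorner δ c) : tube δ c ⊆ tube ρ (parent ρ c) := by
  obtain ⟨m, n, hm, hn⟩ := hc
  exact tube_subset_tube (Ico_subset_Ico_mul_floor hδ hρ hρδ ⟨m, hm⟩)
    (Ico_subset_Ico_mul_floor hδ hρ hρδ ⟨n, hn⟩)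

lemma abs_sub_lt_of_mem_tube_inter {δ a b b' : ℝ} {x : Plane} (hx₀ : |x 0| ≤ 1)
    (hx : x ∈ tube δ (a, b)) (hx' : x ∈ tube δ (a, b')) : |b - b'| < 2 * δ := by
  obtain ⟨u, hu, v, hv, hxuv⟩ := hx
  obtain ⟨u', hu', v', hv', hxuv'⟩ := hx'
  simp only [mem_Ico] at hu hv hu' hv'
  have h_slope : |u' - u| < δ := abs_sub_lt_iff.2 ⟨by linarith, by linarith⟩
  -- both lines pass through `x`, so their intercepts differ by `(u' - u) x₀`
  have h_intercept : |v - v'| < δ :=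
    calc |v - v'| = |u' - u| * |x 0| := by rw [← abs_mul]; congr 1; linarith
      _ ≤ |u' - u| := mul_le_of_le_one_right (abs_nonneg _) hx₀
      _ < δ := h_slope
  rw [abs_sub_lt_iff] at h_intercept ⊢
  constructor <;> linarith

lemma abs_apply_zero_le_one_of_mem_ball {x : Plane} (hx : x ∈ ball (0 : Plane) 1) : |x 0| ≤ 1 := by
  rw [mem_ball_zero_iff] at hx
  exact (PiLp.norm_apply_le x 0).trans hx.le

lemma exists_zpow_two_eq_intCast_mul {k₁ k₂ : ℕ}
    (h : (2 : ℝ) ^ (-(k₁ : ℤ)) ≤ (2 : ℝ) ^ (-(k₂ : ℤ))) :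
    ∃ E : ℤ, (2 : ℝ) ^ (-(k₂ : ℤ)) = E * (2 : ℝ) ^ (-(k₁ : ℤ)) := by
  have hk : k₂ ≤ k₁ := by
    have := (zpow_le_zpow_iff_right₀ (one_lt_two : (1 : ℝ) < 2)).1 h
    omega
  refine ⟨2 ^ (k₁ - k₂), ?_⟩
  rw [Int.cast_pow, Int.cast_two, ← zpow_natCast, ← zpow_add₀ two_ne_zero]
  congr 1
  omega

/-- Lemma `tubeCovering` of the paper: if `P ⊆ B(0,1)` is covered by `M`
dyadic `δ₂`-tubes of fixed slope `a₂ ∈ δ₂ℤ`, then at most `C·M` dyadic `δ₂`-tubes of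
slope `a₂` suffice to cover every dyadic `δ₁`-tube which intersects `P` and has slope
in `[a₂, a₂ + δ₂)`. Dyadic tubes are encoded by the lower-left corners of their
defining dyadic squares. -/
theorem tube_covering :
    ∃ C : ℝ, 1 ≤ C ∧
      ∀ (k₁ k₂ : ℕ) (δ₁ δ₂ : ℝ),
        δ₁ = (2 : ℝ) ^ (-(k₁ : ℤ)) → δ₂ = (2 : ℝ) ^ (-(k₂ : ℤ)) → δ₁ ≤ δ₂ →
        ∀ P : Set Plane, P ⊆ Metric.ball (0 : Plane) 1 →
          ∀ a₂ : ℝ, (∃ n : ℤ, a₂ = n * δ₂) →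
            ∀ (M : ℕ) (bs : Fin M → ℝ),
              (∀ j, ∃ n : ℤ, bs j = n * δ₂) →
              P ⊆ ⋃ j, tube δ₂ (a₂, bs j) →
              ∃ F : Finset ℝ,
                (∀ β ∈ F, ∃ n : ℤ, β = n * δ₂) ∧
                (F.card : ℝ) ≤ C * M ∧
                ∀ c : ℝ × ℝ, DyadicCorner δ₁ c → c.1 ∈ Set.Ico a₂ (a₂ + δ₂) →
                  (tube δ₁ c ∩ P).Nonempty →
                  tube δ₁ c ⊆ ⋃ β ∈ F, tube δ₂ (a₂, β) := by
  refine ⟨3, by norm_num, ?_⟩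
  rintro k₁ k₂ δ₁ δ₂ rfl rfl h12 P hP a₂ ⟨na, rfl⟩ M bs hbs hPcov
  set δ₁ : ℝ := (2 : ℝ) ^ (-(k₁ : ℤ))
  set δ₂ : ℝ := (2 : ℝ) ^ (-(k₂ : ℤ))
  have hδ₁ : 0 < δ₁ := by positivity
  have hδ₂ : 0 < δ₂ := by positivity
  choose nb hnb using hbs
  refine ⟨(Finset.univ ×ˢ Finset.Ico (-1 : ℤ) 2).image fun p => bs p.1 + p.2 * δ₂, ?_, ?_, ?_⟩
  · simp only [Finset.mem_image, Finset.mem_product]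
    rintro _ ⟨⟨j, i⟩, -, rfl⟩
    exact ⟨nb j + i, by rw [hnb]; push_cast; ring⟩
  · refine (Nat.cast_le.2 Finset.card_image_le).trans ?_
    simp [mul_comm]
  rintro c hc hc₁ ⟨x, hxc, hxP⟩
  obtain ⟨j, hxj⟩ := mem_iUnion.1 (hPcov hxP)
  have h_parent : tube δ₁ c ⊆ tube δ₂ (na * δ₂, δ₂ * ⌊c.2 / δ₂⌋) := by
    rw [← mul_floor_div_eq_of_mem_Ico hδ₂ hc₁]
    exact tube_subset_tube_parent hδ₁ hδ₂ (exists_zpow_two_eq_intCast_mul h12) hc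
  have h_offset : |⌊c.2 / δ₂⌋ - nb j| < 2 := by
    have h_close := abs_sub_lt_of_mem_tube_inter (abs_apply_zero_le_one_of_mem_ball (hP hxP))
      (h_parent hxc) hxj
    rw [hnb, mul_comm, ← sub_mul, abs_mul, abs_of_pos hδ₂, mul_lt_mul_iff_left₀ hδ₂] at h_close
    exact_mod_cast h_close
  refine h_parent.trans (subset_biUnion_of_mem (u := fun β => tube δ₂ (na * δ₂, β)) ?_)
  refine Finset.mem_image.2 ⟨(j, ⌊c.2 / δ₂⌋ - nb j), ?_, ?_⟩
  · simp only [Finset.mem_product, Finset.mem_univ, Finset.mem_Ico, true_and]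
    constructor <;> linarith [abs_lt.1 h_offset]
  · rw [hnb]; push_cast; ring
end
end

section
/- Let 0 < s ≤ 1 and let K ⊂ ℝ² be a Furstenberg s-set with associated direction set S_K ⊂ S¹ of positive H¹ measure and associated lines L_e, e ∈ S_K, with dim_H(K ∩ L_e) ≥ s. Let {F_i}_{i∈ℕ} be a countable family of sets with K ⊂ ∪_i F_i. Then for every 0 < ε < s there exist an index i, a constant c > 0, and a set S' ⊂ S_K of positive H¹ measure such that H^{s−ε}_∞(F_i ∩ L_e) ≥ c for every e ∈ S'. In particular, F_i is a Furstenberg (s−ε)-set. -/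
open Metric MeasureTheory Filter Set
open scoped ENNReal NNReal Pointwise

noncomputable section

/-!
For `d > 0` the Hausdorff content `hContent d` is the outer measure built from `diam ^ d`, and
it vanishes exactly on the `μH[d]`-null sets; hence positive content detects dimension `≥ d`, and
`dimH (K ∩ L_e) ≥ s > s - ε` forces positive `(s - ε)`-content. By countable subadditivity some
`F_i ∩ L_e` keeps positive content for each `e ∈ S_K`, so `S_K` is covered by the countably many
sets `{e | hContent (s - ε) (F_i ∩ L_e) ≥ 1 / (n + 1)}`, one of which has positive `H¹` measure.
-/

section HausdorffContent

variable {X : Type*}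

theorem hContent_eq_ofFunction [PseudoEMetricSpace X] {d : ℝ} (hd : 0 < d) :
    hContent d = ⇑(OuterMeasure.ofFunction (fun U : Set X => ediam U ^ d) (by simp [hd])) :=
  rfl

theorem exists_hContent_pos_of_subset_iUnion [PseudoEMetricSpace X] {ι : Type*} [Countable ι]
    {d : ℝ} (hd : 0 < d) {A : Set X} {B : ι → Set X} (hA : 0 < hContent d A)
    (hAB : A ⊆ ⋃ i, B i) : ∃ i, 0 < hContent d (B i) := by
  rw [hContent_eq_ofFunction hd] at hA ⊢
  by_contra! h
  have := measure_iUnion_null_iff.2 fun i => nonpos_iff_eq_zero.1 (h i)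
  exact hA.ne' (measure_mono_null hAB this)

variable [EMetricSpace X] [MeasurableSpace X] [BorelSpace X] {d : ℝ} {A : Set X}

theorem hContent_le_hausdorffMeasure (hd : 0 < d) (A : Set X) : hContent d A ≤ μH[d] A := by
  rw [hContent_eq_ofFunction hd, Measure.hausdorffMeasure, ← OuterMeasure.coe_mkMetric]
  exact OuterMeasure.le_mkMetric _ _ 1 one_pos (fun U _ => OuterMeasure.ofFunction_le U) A

theorem hausdorffMeasure_eq_zero_of_hContent_eq_zero (hd : 0 < d) (h : hContent d A = 0) :
    μH[d] A = 0 := by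
  rw [Measure.hausdorffMeasure_apply]
  refine le_antisymm (iSup₂_le fun r hr => le_of_forall_gt fun η hη => ?_) zero_le
  -- a cover whose `d`-sum is below `r ^ d` only uses sets of diameter at most `r`
  obtain ⟨U, hAU, hU⟩ : ∃ U : ℕ → Set X, A ⊆ ⋃ n, U n ∧
      ∑' n, ediam (U n) ^ d < min η (r ^ d) := by
    have : hContent d A < min η (r ^ d) := h ▸ lt_min hη (ENNReal.rpow_pos_of_nonneg hr hd.le)
    rw [hContent_eq_ofFunction hd, OuterMeasure.ofFunction_apply] at this
    simpa only [iInf_lt_iff, exists_prop] using this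
  have hdiam : ∀ n, ediam (U n) ≤ r := fun n => ((ENNReal.rpow_lt_rpow_iff hd).1
    ((ENNReal.le_tsum n).trans_lt (hU.trans_le (min_le_right _ _)))).le
  calc _ ≤ ∑' n, ⨆ _ : (U n).Nonempty, ediam (U n) ^ d := iInf₂_le_of_le U hAU (iInf_le _ hdiam)
    _ ≤ ∑' n, ediam (U n) ^ d := ENNReal.tsum_le_tsum fun n => iSup_le fun _ => le_rfl
    _ < η := hU.trans_le (min_le_left _ _)

theorem hContent_pos_of_lt_dimH (hd : 0 < d) (h : ENNReal.ofReal d < dimH A) :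
    0 < hContent d A := by
  refine pos_iff_ne_zero.2 fun h0 => ?_
  have := hausdorffMeasure_of_lt_dimH (d := d.toNNReal) h
  rw [Real.coe_toNNReal d hd.le, hausdorffMeasure_eq_zero_of_hContent_eq_zero hd h0] at this
  exact ENNReal.zero_ne_top this

theorem le_dimH_of_hContent_pos (hd : 0 < d) (h : 0 < hContent d A) :
    ENNReal.ofReal d ≤ dimH A := by
  refine le_dimH_of_hausdorffMeasure_ne_zero (d := d.toNNReal) ?_
  rw [Real.coe_toNNReal d hd.le]
  exact (h.trans_le (hContent_le_hausdorffMeasure hd A)).ne'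

end HausdorffContent

theorem exists_measure_pos_setOf_ofReal_le {α ι : Type*} [MeasurableSpace α] [Countable ι]
    {μ : Measure α} {S : Set α} (hS : μ S ≠ 0) (f : ι → α → ℝ≥0∞)
    (hf : ∀ x ∈ S, ∃ i, 0 < f i x) :
    ∃ i, ∃ c : ℝ, 0 < c ∧ 0 < μ {x ∈ S | ENNReal.ofReal c ≤ f i x} := by
  have hcover : S ⊆ ⋃ p : ι × ℕ, {x ∈ S | ENNReal.ofReal (1 / (p.2 + 1)) ≤ f p.1 x} := by
    intro x hx
    obtain ⟨i, hi⟩ := hf x hx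
    obtain ⟨r, -, hr, hrf⟩ := ENNReal.lt_iff_exists_real_btwn.1 hi
    obtain ⟨n, hn⟩ := exists_nat_one_div_lt (ENNReal.ofReal_pos.1 hr)
    exact mem_iUnion.2 ⟨(i, n), hx, (ENNReal.ofReal_le_ofReal hn.le).trans hrf.le⟩
  obtain ⟨⟨i, n⟩, hpos⟩ :=
    exists_measure_pos_of_not_measure_iUnion_null fun h => hS (measure_mono_null hcover h)
  exact ⟨i, 1 / (n + 1), Nat.one_div_pos_of_nat, hpos⟩

/-- if `K` is a Furstenberg `s`-set with direction set `S_K` and lines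
`L_e = lineThrough (L e) e`, and `{F_i}` is a countable cover of `K`, then for every
`0 < ε < s` some `F_i` carries `(s-ε)`-dimensional Hausdorff content `≥ c > 0` on the
lines `L_e` for a positive measure set of directions `e`; in particular `F_i` is a
Furstenberg `(s-ε)`-set. -/
theorem furstenberg_cover_member :
    ∀ s : ℝ, 0 < s → s ≤ 1 →
      ∀ (K SK : Set Plane) (L : Plane → Plane),
        SK ⊆ Metric.sphere (0 : Plane) 1 →
        0 < μH[1] SK →
        (∀ e ∈ SK, ENNReal.ofReal s ≤ dimH (K ∩ lineThrough (L e) e)) →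
        ∀ F : ℕ → Set Plane, K ⊆ ⋃ i, F i →
          ∀ ε : ℝ, 0 < ε → ε < s →
            ∃ (i : ℕ) (c : ℝ) (S' : Set Plane),
              0 < c ∧ S' ⊆ SK ∧ 0 < μH[1] S' ∧
              ∀ e ∈ S',
                ENNReal.ofReal c ≤ hContent (s - ε) (F i ∩ lineThrough (L e) e) ∧
                ENNReal.ofReal (s - ε) ≤ dimH (F i ∩ lineThrough (L e) e) := by
  intro s hs _ K SK L _ hSK hdim F hKF ε _ hεs
  have hd : 0 < s - ε := sub_pos.2 hεs
  have hpos : ∀ e ∈ SK, ∃ i, 0 < hContent (s - ε) (F i ∩ lineThrough (L e) e) := by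
    intro e he
    have hK : 0 < hContent (s - ε) (K ∩ lineThrough (L e) e) :=
      hContent_pos_of_lt_dimH hd <|
        ((ENNReal.ofReal_lt_ofReal_iff hs).2 (by linarith)).trans_le (hdim e he)
    refine exists_hContent_pos_of_subset_iUnion hd hK ?_
    rw [← iUnion_inter]
    exact inter_subset_inter_left _ hKF
  obtain ⟨i, c, hc, hS'⟩ := exists_measure_pos_setOf_ofReal_le hSK.ne' _ hpos
  refine ⟨i, c, _, hc, sep_subset _ _, hS', fun e he => ⟨he.2, ?_⟩⟩
  exact le_dimH_of_hContent_pos hd ((ENNReal.ofReal_pos.2 hc).trans_le he.2)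
end
end

section
/- Let K ⊂ ℝ² be compact, let s > 0 and c > 0. Suppose (a_j, b_j) ∈ ℝ², j ∈ ℕ, converge to (a,b) ∈ ℝ², and let L_j = {(x, a_j x + b_j) : x ∈ ℝ} and L = {(x, ax + b) : x ∈ ℝ} be the corresponding lines. If H^s_∞(K ∩ L_j) ≥ c for every j, then H^s_∞(K ∩ L) ≥ c. -/
open Metric MeasureTheory Filter Set
open scoped ENNReal NNReal Pointwise

noncomputable section

open scoped Topology

/-!
If `H^s_∞(K ∩ L) < c`, a cover of `K ∩ L` witnessing this can be enlarged to an open cover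
`W` with the same bound, since `diam` grows by at most `2ε` under `ε`-thickening. By the tube lemma,
the compact set `K \ W` misses every line close enough to `L`, so eventually `K ∩ L_j ⊆ W` and
`H^s_∞(K ∩ L_j) < c`.
-/

section HausdorffContent

variable {X : Type*} [PseudoEMetricSpace X] {s : ℝ}

lemma hContent_le_tsum {B : Set X} {U : ℕ → Set X} (hU : B ⊆ ⋃ i, U i) :
    hContent s B ≤ ∑' i, ediam (U i) ^ s :=
  iInf₂_le U hU

lemma hContent_mono {A B : Set X} (h : A ⊆ B) : hContent s A ≤ hContent s B :=
  le_iInf₂ fun _ hU => hContent_le_tsum (h.trans hU)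

lemma exists_isOpen_superset_ediam_rpow_lt (hs : 0 ≤ s) (U : Set X)
    (hU : ediam U ^ s ≠ ∞) {δ : ℝ≥0∞} (hδ : δ ≠ 0) :
    ∃ V, IsOpen V ∧ U ⊆ V ∧ ediam V ^ s < ediam U ^ s + δ := by
  have hlim : Tendsto (fun ε : ℝ≥0 => (ediam U + 2 * (ε : ℝ≥0∞)) ^ s) (𝓝 0)
      (𝓝 (ediam U ^ s)) := by
    have hcont : Continuous fun ε : ℝ≥0 => (ediam U + 2 * (ε : ℝ≥0∞)) ^ s :=
      ENNReal.continuous_rpow_const.comp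
        (continuous_const.add ((ENNReal.continuous_const_mul (by norm_num)).comp
          ENNReal.continuous_coe))
    simpa using hcont.tendsto 0
  obtain ⟨ε, hεδ, hε⟩ := (((hlim.eventually_lt_const (ENNReal.lt_add_right hU hδ)).filter_mono
    nhdsWithin_le_nhds).and (eventually_mem_nhdsWithin (s := Ioi 0))).exists
  refine ⟨thickening ε U, isOpen_thickening,
    self_subset_thickening (by exact_mod_cast hε) U, ?_⟩
  exact (ENNReal.rpow_le_rpow (ediam_thickening_le ε) hs).trans_lt hεδ

lemma exists_isOpen_superset_hContent_lt (hs : 0 ≤ s) {B : Set X} {c : ℝ≥0∞}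
    (hB : hContent s B < c) : ∃ W, IsOpen W ∧ B ⊆ W ∧ hContent s W < c := by
  obtain ⟨U, hBU, hUc⟩ : ∃ U : ℕ → Set X, B ⊆ ⋃ i, U i ∧ ∑' i, ediam (U i) ^ s < c := by
    simp only [hContent, iInf_lt_iff, exists_prop] at hB
    exact hB
  obtain ⟨δ, hδpos, hδc⟩ := ENNReal.exists_pos_sum_of_countable (tsub_pos_of_lt hUc).ne' ℕ
  have hU : ∀ i, ediam (U i) ^ s ≠ ∞ := fun i =>
    ((ENNReal.le_tsum i).trans_lt (hUc.trans_le le_top)).ne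
  choose V hVo hUV hVU using fun i =>
    exists_isOpen_superset_ediam_rpow_lt hs (U i) (hU i) (ENNReal.coe_ne_zero.mpr (hδpos i).ne')
  refine ⟨⋃ i, V i, isOpen_iUnion hVo, hBU.trans (iUnion_mono hUV), ?_⟩
  calc hContent s (⋃ i, V i)
      ≤ ∑' i, ediam (V i) ^ s := hContent_le_tsum subset_rfl
    _ ≤ ∑' i, (ediam (U i) ^ s + δ i) := ENNReal.tsum_le_tsum fun i => (hVU i).le
    _ = ∑' i, ediam (U i) ^ s + ∑' i, (δ i : ℝ≥0∞) := ENNReal.tsum_add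
    _ < c := lt_tsub_iff_left.mp hδc

end HausdorffContent

lemma IsCompact.eventually_inter_subset_of_isClosed {X Y : Type*} [TopologicalSpace X]
    [TopologicalSpace Y] {K W : Set X} {L : Y → Set X} (hK : IsCompact K) (hW : IsOpen W)
    (hL : IsClosed {p : Y × X | p.2 ∈ L p.1}) {y₀ : Y} (h : K ∩ L y₀ ⊆ W) :
    ∀ᶠ y in 𝓝 y₀, K ∩ L y ⊆ W := by
  have hfar : ∀ᶠ y in 𝓝 y₀, ∀ x ∈ K \ W, x ∉ L y :=
    (hK.diff hW).eventually_forall_of_forall_eventually fun x hx =>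
      hL.isOpen_compl.mem_nhds fun hmem => hx.2 (h ⟨hx.1, hmem⟩)
  filter_upwards [hfar] with y hy x hx
  exact by_contra fun hxW => hy x ⟨hx.1, hxW⟩ hx.2

lemma isClosed_incidence_lines :
    IsClosed {p : (ℝ × ℝ) × Plane | p.2 1 = p.1.1 * p.2 0 + p.1.2} :=
  isClosed_eq (by fun_prop) (by fun_prop)

/-- upper semicontinuity of Hausdorff content along converging lines:
if `(a_j, b_j) → (a, b)` and `H^s_∞(K ∩ L_j) ≥ c` for the lines
`L_j = {(x, a_j x + b_j)}` and a compact set `K`, then `H^s_∞(K ∩ L) ≥ c` for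
`L = {(x, ax + b)}`. -/
theorem content_semicontinuous_along_lines :
    ∀ K : Set Plane, IsCompact K →
      ∀ s c : ℝ, 0 < s → 0 < c →
        ∀ (ab : ℕ → ℝ × ℝ) (l : ℝ × ℝ),
          Filter.Tendsto ab Filter.atTop (nhds l) →
          (∀ j : ℕ, ENNReal.ofReal c ≤
            hContent s (K ∩ {q : Plane | q 1 = (ab j).1 * q 0 + (ab j).2})) →
          ENNReal.ofReal c ≤ hContent s (K ∩ {q : Plane | q 1 = l.1 * q 0 + l.2}) := by
  intro K hK s c hs _ ab l hab hge
  by_contra! hlt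
  obtain ⟨W, hWo, hLW, hWc⟩ := exists_isOpen_superset_hContent_lt hs.le hlt
  obtain ⟨j, hj⟩ := (hab.eventually
    (hK.eventually_inter_subset_of_isClosed (L := fun l => {q : Plane | q 1 = l.1 * q 0 + l.2})
      hWo isClosed_incidence_lines hLW)).exists
  exact ((hge j).trans (hContent_mono hj)).not_gt hWc
end
end

section
/- There is an absolute constant C' ≥ 1 with the following property. Let 0 < t ≤ 1, C ≥ 1, 0 < δ < 1/2, and let P ⊂ B(0,1) ⊂ ℝ² be a (δ,t,C)-set. Then for every p ∈ P, Σ_{q ∈ P, q ≠ p} |p − q|^{−t} ≤ C'·C·δ^{−t}·log(1/δ). -/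
/-!
Sort the points `q ≠ p` into the dyadic annuli `2^k δ ≤ |p - q| < 2^(k+1) δ`. Since
`δ ≤ |p - q| ≤ 2`, only `O(log (1/δ))` of them are nonempty. The `(δ,t,C)`-condition at scale
`r = min(2^(k+1) δ, 1)` allows at most `C (r/δ)^t` points in the `k`-th annulus, each
contributing at most `(r/2)^(-t)`, so every annulus contributes at most `2^t C δ^(-t)`.
-/

open Metric MeasureTheory Filter Set
open scoped ENNReal NNReal Pointwise

noncomputable section

def annulusIndex (δ d : ℝ) : ℕ := Nat.log 2 ⌊d / δ⌋₊

lemma two_pow_annulusIndex_mul_le {δ d : ℝ} (hδ : 0 < δ) (hd : δ ≤ d) :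
    2 ^ annulusIndex δ d * δ ≤ d := by
  have hdδ : 1 ≤ d / δ := (one_le_div hδ).mpr hd
  calc (2 : ℝ) ^ annulusIndex δ d * δ ≤ ⌊d / δ⌋₊ * δ := by
        gcongr
        exact_mod_cast Nat.pow_log_le_self 2 (Nat.floor_pos.mpr hdδ).ne'
    _ ≤ d / δ * δ := by gcongr; exact Nat.floor_le (by linarith)
    _ = d := div_mul_cancel₀ d hδ.ne'

lemma lt_two_pow_annulusIndex_succ_mul {δ : ℝ} (d : ℝ) (hδ : 0 < δ) :
    d < 2 ^ (annulusIndex δ d + 1) * δ := by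
  rw [← div_lt_iff₀ hδ]
  calc d / δ < ⌊d / δ⌋₊ + 1 := Nat.lt_floor_add_one _
    _ ≤ 2 ^ (annulusIndex δ d + 1) := by
        exact_mod_cast Nat.lt_pow_succ_log_self one_lt_two _

lemma annulusIndex_mono {δ : ℝ} (hδ : 0 < δ) : Monotone (annulusIndex δ) := fun _ _ h =>
  Nat.log_mono_right (Nat.floor_le_floor (div_le_div_of_nonneg_right h hδ.le))

lemma annulusIndex_two_add_one_le {δ : ℝ} (hδ : 0 < δ) (hδ2 : δ < 1 / 2) :
    (annulusIndex δ 2 + 1 : ℝ) ≤ 5 * Real.log (1 / δ) := by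
  set k := annulusIndex δ 2
  have hpow : (2 : ℝ) ^ k ≤ 2 * (1 / δ) := by
    rw [mul_one_div, le_div_iff₀ hδ]
    exact two_pow_annulusIndex_mul_le hδ (by linarith)
  have hk : k * Real.log 2 ≤ Real.log 2 + Real.log (1 / δ) := by
    rw [← Real.log_pow, ← Real.log_mul two_ne_zero (by positivity)]
    exact Real.log_le_log (by positivity) hpow
  have hL : Real.log 2 ≤ Real.log (1 / δ) :=
    Real.log_le_log two_pos (by rw [le_div_iff₀ hδ]; linarith)
  have hlog2 := Real.log_two_gt_d9
  refine le_of_mul_le_mul_right ?_ (by linarith : 0 < Real.log 2)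
  nlinarith

namespace IsDeltaSet

variable {X : Type*} [PseudoMetricSpace X] {δ s C : ℝ} {P : Set X}

lemma card_le_of_subset_closedBall (hP : IsDeltaSet δ s C P) {A : Finset X} {c : X} {r : ℝ}
    (hδr : δ ≤ r) (hr1 : r ≤ 1) (hA : ↑A ⊆ P ∩ closedBall c r) :
    (A.card : ℝ) ≤ C * (r / δ) ^ s :=
  calc (A.card : ℝ) = (A : Set X).ncard := by rw [Set.ncard_coe_finset]
    _ ≤ (P ∩ closedBall c r).ncard := by
        exact_mod_cast Set.ncard_le_ncard hA (hP.1.inter_of_left _)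
    _ ≤ _ := hP.2.2 c r hδr hr1

lemma sum_rpow_neg_dist_le_of_subset_closedBall (hP : IsDeltaSet δ s C P) (hδ : 0 < δ)
    (hs : 0 ≤ s) {A : Finset X} {c p : X} {r : ℝ} (hδr : δ ≤ r) (hr1 : r ≤ 1)
    (hA : ↑A ⊆ P ∩ closedBall c r) (hAp : ∀ q ∈ A, r / 2 ≤ dist p q) :
    ∑ q ∈ A, dist p q ^ (-s) ≤ 2 ^ s * C * δ ^ (-s) := by
  have hr : 0 < r := hδ.trans_le hδr
  calc ∑ q ∈ A, dist p q ^ (-s) ≤ ∑ _q ∈ A, (r / 2) ^ (-s) :=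
        Finset.sum_le_sum fun q hq =>
          Real.rpow_le_rpow_of_nonpos (by positivity) (hAp q hq) (by linarith)
    _ = A.card * (r / 2) ^ (-s) := by rw [Finset.sum_const, nsmul_eq_mul]
    _ ≤ C * (r / δ) ^ s * (r / 2) ^ (-s) := by
        gcongr; exact hP.card_le_of_subset_closedBall hδr hr1 hA
    _ = 2 ^ s * C * δ ^ (-s) := by
        rw [Real.rpow_neg (by positivity), Real.rpow_neg hδ.le, Real.div_rpow hr.le hδ.le,
          Real.div_rpow hr.le zero_le_two]
        field_simp

lemma sum_annulus_le (hP : IsDeltaSet δ s C P) {x₀ : X} (hPx₀ : P ⊆ closedBall x₀ 1)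
    (hδ : 0 < δ) (hδ1 : δ ≤ 1) (hs : 0 ≤ s) (p : X) (k : ℕ) {A : Finset X} (hAP : ↑A ⊆ P)
    (hA : ∀ q ∈ A, 2 ^ k * δ ≤ dist p q ∧ dist p q < 2 ^ (k + 1) * δ) :
    ∑ q ∈ A, dist p q ^ (-s) ≤ 2 ^ s * C * δ ^ (-s) := by
  -- Above scale `1` the `(δ,s,C)`-condition says nothing, so large annuli are counted in the
  -- ball around `x₀` instead of the one around `p`.
  by_cases hk : 2 ^ (k + 1) * δ ≤ 1
  · have hδk : δ ≤ 2 ^ (k + 1) * δ := le_mul_of_one_le_left hδ.le (one_le_pow₀ one_le_two)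
    refine hP.sum_rpow_neg_dist_le_of_subset_closedBall (c := p) hδ hs hδk hk
      (fun q hq => ⟨hAP hq, ?_⟩) fun q hq => ?_
    · rw [mem_closedBall, dist_comm]; exact (hA q hq).2.le
    · rw [pow_succ]; linarith [(hA q hq).1]
  · refine hP.sum_rpow_neg_dist_le_of_subset_closedBall hδ hs hδ1 le_rfl
      (fun q hq => ⟨hAP hq, hPx₀ (hAP hq)⟩) fun q hq => ?_
    rw [pow_succ] at hk
    linarith [(hA q hq).1]

theorem finsum_rpow_neg_dist_le (hP : IsDeltaSet δ s C P) {x₀ : X} (hPx₀ : P ⊆ closedBall x₀ 1)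
    (hδ : 0 < δ) (hδ1 : δ ≤ 1) (hs : 0 ≤ s) {p : X} (hp : p ∈ P) :
    ∑ᶠ q ∈ P \ {p}, dist p q ^ (-s) ≤ (annulusIndex δ 2 + 1) * (2 ^ s * C * δ ^ (-s)) := by
  classical
  have hfin : (P \ {p}).Finite := hP.1.sdiff
  rw [finsum_mem_eq_finite_toFinset_sum _ hfin]
  have hdist : ∀ q ∈ hfin.toFinset, q ∈ P ∧ δ ≤ dist p q ∧ dist p q ≤ 2 := by
    intro q hq
    rw [Set.Finite.mem_toFinset] at hq
    refine ⟨hq.1, hP.2.1 p hp q hq.1 (Ne.symm hq.2), ?_⟩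
    calc dist p q ≤ dist p x₀ + dist q x₀ := dist_triangle_right _ _ _
      _ ≤ 1 + 1 := add_le_add (hPx₀ hp) (hPx₀ hq.1)
      _ = 2 := one_add_one_eq_two
  have hmaps : ∀ q ∈ hfin.toFinset,
      annulusIndex δ (dist p q) ∈ Finset.range (annulusIndex δ 2 + 1) := fun q hq =>
    Finset.mem_range_succ_iff.mpr (annulusIndex_mono hδ (hdist q hq).2.2)
  rw [← Finset.sum_fiberwise_of_maps_to hmaps]
  calc _ ≤ ∑ _k ∈ Finset.range (annulusIndex δ 2 + 1), 2 ^ s * C * δ ^ (-s) := by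
        refine Finset.sum_le_sum fun k _ => hP.sum_annulus_le hPx₀ hδ hδ1 hs p k
          (fun q hq => (hdist q (Finset.mem_filter.mp hq).1).1) fun q hq => ?_
        obtain ⟨hqs, rfl⟩ := Finset.mem_filter.mp hq
        exact ⟨two_pow_annulusIndex_mul_le hδ (hdist q hqs).2.1,
          lt_two_pow_annulusIndex_succ_mul _ hδ⟩
    _ = _ := by rw [Finset.sum_const, Finset.card_range, nsmul_eq_mul, Nat.cast_succ]

end IsDeltaSet

/-- the standard dyadic-annuli estimate: for a `(δ,t,C)`-set
`P ⊆ B(0,1) ⊆ ℝ²` and any `p ∈ P`, `∑_{q ∈ P, q ≠ p} |p - q|^{-t} ≤ C'·C·δ^{-t}·log(1/δ)`. -/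
theorem delta_set_riesz_sum :
    ∃ C' : ℝ, 1 ≤ C' ∧
      ∀ t C δ : ℝ, 0 < t → t ≤ 1 → 1 ≤ C → 0 < δ → δ < 1/2 →
        ∀ P : Set Plane, P ⊆ Metric.ball (0 : Plane) 1 →
          IsDeltaSet δ t C P →
          ∀ p ∈ P,
            (∑ᶠ q ∈ P \ {p}, (dist p q) ^ (-t)) ≤ C' * C * δ ^ (-t) * Real.log (1/δ) := by
  refine ⟨10, by norm_num, fun t C δ ht ht1 hC hδ hδ2 P hP1 hP p hp => ?_⟩
  have h2t : (2 : ℝ) ^ t ≤ 2 := by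
    simpa using Real.rpow_le_rpow_of_exponent_le one_le_two ht1
  have hK := annulusIndex_two_add_one_le hδ hδ2
  calc _ ≤ (annulusIndex δ 2 + 1) * (2 ^ t * C * δ ^ (-t)) :=
        hP.finsum_rpow_neg_dist_le (fun q hq => ball_subset_closedBall (hP1 hq)) hδ
          (by linarith) ht.le hp
    _ ≤ (5 * Real.log (1 / δ)) * (2 * C * δ ^ (-t)) := by
        gcongr
        exact (by positivity : (0 : ℝ) ≤ _).trans hK
    _ = _ := by ring
end
end
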